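/- arXiv:1901.09401 — 5 statements merged into one kernel-verified Lean document; each statement's English description precedes it below -/
import Mathlib

section
/- Suppose the pair (f, D) satisfies expected smoothness ES(𝓛) with respect to a minimizer x* of f, and the gradient noise σ² = E_D[‖∇f_v(x*)‖²] is finite. Then for every x ∈ ℝ^d, E_D[‖∇f_v(x)‖²] ≤ 4𝓛 (f(x) − f(x*)) + 2σ². -/
open MeasureTheory

/-- **Lemma 2 (key lemma).** If `(f, D)` satisfies expected smoothness `ES(𝓛)` with respect to
a minimizer `x*` of `f`, and the gradient noise `σ² = E_D[‖∇f_v(x*)‖²]` is finite, then for all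
`x`, `E_D[‖∇f_v(x)‖²] ≤ 4𝓛 (f(x) − f(x*)) + 2σ²`. Here `f = (1/n) Σ f_i`,
`∇f_v(x) = (1/n) Σ_i v_i ∇f_i(x)`, and `D` is a probability distribution on `ℝⁿ`. -/
theorem sgd_key_lemma_bound_second_moment
    {d n : ℕ} (f : Fin n → EuclideanSpace ℝ (Fin d) → ℝ)
    (hdiff : ∀ i, Differentiable ℝ (f i))
    (F : EuclideanSpace ℝ (Fin d) → ℝ)
    (hF : ∀ x, F x = (1 / (n : ℝ)) * ∑ i, f i x)
    (g : (Fin n → ℝ) → EuclideanSpace ℝ (Fin d) → EuclideanSpace ℝ (Fin d))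
    (hg : ∀ v x, g v x = ((n : ℝ)⁻¹) • ∑ i, v i • gradient (f i) x)
    (D : Measure (Fin n → ℝ)) [IsProbabilityMeasure D]
    (xstar : EuclideanSpace ℝ (Fin d))
    (hmin : ∀ x, F xstar ≤ F x)
    (𝓛 : ℝ) (h𝓛 : 0 < 𝓛)
    (hES : ∀ x, ∫ v, ‖g v x - g v xstar‖ ^ 2 ∂D ≤ 2 * 𝓛 * (F x - F xstar))
    (σ2 : ℝ) (hσ2 : σ2 = ∫ v, ‖g v xstar‖ ^ 2 ∂D)
    (hσ2fin : Integrable (fun v => ‖g v xstar‖ ^ 2) D) :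
    ∀ x, ∫ v, ‖g v x‖ ^ 2 ∂D ≤ 4 * 𝓛 * (F x - F xstar) + 2 * σ2 := by
  intro x
  have hgap : 0 ≤ F x - F xstar := sub_nonneg.mpr (hmin x)
  have hσ2nn : 0 ≤ σ2 := by
    rw [hσ2]; exact integral_nonneg fun v => by positivity
  -- measurability of v ↦ g v y
  have hmeas : ∀ y, AEStronglyMeasurable (fun v => ‖g v y‖ ^ 2) D := by
    intro y
    have hc : Continuous fun v : Fin n → ℝ =>
        ((n : ℝ)⁻¹) • ∑ i, v i • gradient (f i) y := by
      fun_prop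
    have : Continuous fun v => ‖g v y‖ ^ 2 := by
      simp only [hg]
      exact (hc.norm.pow 2)
    exact this.aestronglyMeasurable
  have hmeasd : AEStronglyMeasurable (fun v => ‖g v x - g v xstar‖ ^ 2) D := by
    have hc : Continuous fun v : Fin n → ℝ =>
        (((n : ℝ)⁻¹) • ∑ i, v i • gradient (f i) x)
          - (((n : ℝ)⁻¹) • ∑ i, v i • gradient (f i) xstar) := by
      fun_prop
    have : Continuous fun v => ‖g v x - g v xstar‖ ^ 2 := by
      simp only [hg]
      exact hc.norm.pow 2
    exact this.aestronglyMeasurable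
  have key : ∀ v, ‖g v x‖ ^ 2 ≤ 2 * ‖g v x - g v xstar‖ ^ 2 + 2 * ‖g v xstar‖ ^ 2 := by
    intro v
    have h1 : ‖g v x‖ ≤ ‖g v x - g v xstar‖ + ‖g v xstar‖ := by
      calc ‖g v x‖ = ‖(g v x - g v xstar) + g v xstar‖ := by rw [sub_add_cancel]
        _ ≤ _ := norm_add_le _ _
    have h2 : ‖g v x‖ ^ 2 ≤ (‖g v x - g v xstar‖ + ‖g v xstar‖) ^ 2 := by
      have := norm_nonneg (g v x); nlinarith
    nlinarith [sq_nonneg (‖g v x - g v xstar‖ - ‖g v xstar‖)]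
  by_cases hint : Integrable (fun v => ‖g v x - g v xstar‖ ^ 2) D
  · have hintsum : Integrable
        (fun v => 2 * ‖g v x - g v xstar‖ ^ 2 + 2 * ‖g v xstar‖ ^ 2) D :=
      (hint.const_mul 2).add (hσ2fin.const_mul 2)
    have hintx : Integrable (fun v => ‖g v x‖ ^ 2) D := by
      refine hintsum.mono' (hmeas x) ?_
      filter_upwards with v
      rw [Real.norm_eq_abs, abs_of_nonneg (by positivity)]
      exact key v
    have h2 : ∫ v, ‖g v x‖ ^ 2 ∂D
        ≤ ∫ v, (2 * ‖g v x - g v xstar‖ ^ 2 + 2 * ‖g v xstar‖ ^ 2) ∂D :=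
      integral_mono hintx hintsum key
    have h3 : ∫ v, (2 * ‖g v x - g v xstar‖ ^ 2 + 2 * ‖g v xstar‖ ^ 2) ∂D
        = 2 * (∫ v, ‖g v x - g v xstar‖ ^ 2 ∂D) + 2 * σ2 := by
      rw [integral_add (hint.const_mul 2) (hσ2fin.const_mul 2),
        MeasureTheory.integral_const_mul, MeasureTheory.integral_const_mul, hσ2]
    have h4 := hES x
    linarith
  · have hnix : ¬ Integrable (fun v => ‖g v x‖ ^ 2) D := by
      intro hx
      apply hint
      have hintsum : Integrable (fun v => 2 * ‖g v x‖ ^ 2 + 2 * ‖g v xstar‖ ^ 2) D :=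
        (hx.const_mul 2).add (hσ2fin.const_mul 2)
      refine hintsum.mono' hmeasd ?_
      filter_upwards with v
      rw [Real.norm_eq_abs, abs_of_nonneg (by positivity)]
      have h1 : ‖g v x - g v xstar‖ ≤ ‖g v x‖ + ‖g v xstar‖ := norm_sub_le _ _
      have h2 : ‖g v x - g v xstar‖ ^ 2 ≤ (‖g v x‖ + ‖g v xstar‖) ^ 2 := by
        have := norm_nonneg (g v x - g v xstar); nlinarith
      nlinarith [sq_nonneg (‖g v x‖ - ‖g v xstar‖)]
    rw [integral_undef hnix]
    positivity
end

section
/- Let S be a proper sampling on {1, …, n} with weights (p_C), marginals p_i and pairwise marginals P_ij, and let v(C)_i = 1_{i∈C}/p_i. Assume each f_i : ℝ^d → ℝ is convex and M_i-smooth, and let x* satisfy ∇f(x*) = 0. Then for all x ∈ ℝ^d, Σ_C p_C ‖∇f_{v(C)}(x) − ∇f_{v(C)}(x*)‖² ≤ 2 𝓛_max (f(x) − f(x*)), where 𝓛_max = max_{i∈[n]} Σ_{C : i∈C} (p_C/p_i) L_C and L_C = (1/n) λmax(Σ_{j∈C} M_j/p_j). Moreover 𝓛_max ≤ (1/n) max_{i∈[n]}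 Σ_{j∈[n]} P_ij λmax(M_j)/(p_i p_j). -/
open RealInnerProductSpace

/-- The largest eigenvalue of a (symmetric) real matrix, characterized as the supremum of the
Rayleigh quotient `⟨Ax, x⟩` over the unit sphere. -/
noncomputable def lamMax {d : ℕ} (A : Matrix (Fin d) (Fin d) ℝ) : ℝ :=
  sSup {r : ℝ | ∃ x : EuclideanSpace ℝ (Fin d), ‖x‖ = 1 ∧ r = ∑ j, ∑ k, A j k * x k * x j}

section Helpers
open InnerProductSpace
set_option linter.unusedSectionVars false

variable {E : Type*} [NormedAddCommGroup E] [InnerProductSpace ℝ E] [CompleteSpace E]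

lemma hasGradientAt_comb {ι : Type*} (s : Finset ι) (b : ℝ) (c : ι → ℝ) (g : ι → E → ℝ)
    (G : ι → E) (x : E) (hg : ∀ i ∈ s, HasGradientAt (g i) (G i) x) :
    HasGradientAt (fun y => b * ∑ i ∈ s, c i * g i y) (b • ∑ i ∈ s, c i • G i) x := by
  have hf : HasFDerivAt (fun y => b * ∑ i ∈ s, c i * g i y)
      (b • ∑ i ∈ s, c i • (toDual ℝ E (G i) : E →L[ℝ] ℝ)) x :=
    (HasFDerivAt.fun_sum (fun i hi =>
      (hasGradientAt_iff_hasFDerivAt.mp (hg i hi)).const_mul (c i))).const_mul b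
  rw [hasGradientAt_iff_hasFDerivAt]
  have : (toDual ℝ E) (b • ∑ i ∈ s, c i • G i)
      = b • ∑ i ∈ s, c i • (toDual ℝ E (G i) : E →L[ℝ] ℝ) := by
    simp [map_smul, map_sum]
  rw [this]; exact hf

lemma tangent_line_le (f : E → ℝ) (hc : ConvexOn ℝ Set.univ f) {y : E} (gy : E)
    (hy : HasGradientAt f gy y) (x : E) : f y + ⟪gy, x - y⟫ ≤ f x := by
  have hline : HasDerivAt (fun t : ℝ => y + t • (x - y)) (x - y) 0 := by
    simpa using ((hasDerivAt_id (0:ℝ)).smul_const (x - y)).const_add y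
  have hg : HasDerivAt (fun t : ℝ => f (y + t • (x - y))) ⟪gy, x - y⟫ 0 := by
    have hfd : HasFDerivAt f (toDual ℝ E gy) (y + (0:ℝ) • (x - y)) := by
      simpa using hasGradientAt_iff_hasFDerivAt.mp hy
    exact hfd.comp_hasDerivAt 0 hline
  have tsl := hasDerivAt_iff_tendsto_slope.mp hg
  have tsl' : Filter.Tendsto (slope (fun t : ℝ => f (y + t • (x - y))) 0)
      (nhdsWithin 0 (Set.Ioi 0)) (nhds ⟪gy, x - y⟫) :=
    tsl.mono_left (nhdsWithin_mono 0 (fun t ht => ne_of_gt ht))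
  have hev : ∀ᶠ t in nhdsWithin (0:ℝ) (Set.Ioi 0),
      slope (fun t : ℝ => f (y + t • (x - y))) 0 t ≤ f x - f y := by
    filter_upwards [Ioo_mem_nhdsGT_of_mem (Set.mem_Ico.mpr ⟨le_refl (0:ℝ), zero_lt_one⟩)] with t ht
    have h1 : f (y + t • (x - y)) ≤ (1 - t) * f y + t * f x := by
      have := hc.2 (Set.mem_univ x) (Set.mem_univ y) (le_of_lt ht.1)
        (by linarith [ht.2] : (0:ℝ) ≤ 1 - t) (by ring)
      have heq : t • x + (1 - t) • y = y + t • (x - y) := by module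
      rw [heq] at this; simp only [smul_eq_mul] at this; linarith [this]
    rw [slope_def_field]
    simp only [sub_zero, zero_smul, add_zero]
    rw [div_le_iff₀ ht.1]
    nlinarith [h1]
  have := le_of_tendsto tsl' hev
  linarith [this]

lemma convexOn_comb {ι : Type*} (s : Finset ι) (b : ℝ) (hb : 0 ≤ b) (c : ι → ℝ)
    (hc : ∀ i, 0 ≤ c i) (g : ι → E → ℝ) (hg : ∀ i, ConvexOn ℝ Set.univ (g i)) :
    ConvexOn ℝ Set.univ (fun x => b * ∑ i ∈ s, c i * g i x) := by
  refine ⟨convex_univ, fun x _ y _ u v hu hv huv => ?_⟩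
  have key : ∀ i ∈ s, c i * g i (u • x + v • y) ≤ c i * (u * g i x + v * g i y) := by
    intro i _
    have := (hg i).2 (Set.mem_univ x) (Set.mem_univ y) hu hv huv
    simp only [smul_eq_mul] at this
    exact mul_le_mul_of_nonneg_left this (hc i)
  have hsum := Finset.sum_le_sum key
  have := mul_le_mul_of_nonneg_left hsum hb
  simp only [smul_eq_mul]
  calc b * ∑ i ∈ s, c i * g i (u • x + v • y) ≤ b * ∑ i ∈ s, c i * (u * g i x + v * g i y) := this
    _ = u * (b * ∑ i ∈ s, c i * g i x) + v * (b * ∑ i ∈ s, c i * g i y) := by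
        rw [Finset.mul_sum, Finset.mul_sum, Finset.mul_sum, Finset.mul_sum, Finset.mul_sum,
          ← Finset.sum_add_distrib]
        congr 1; ext i; ring

lemma convexOn_sub_inner (f : E → ℝ) (hf : ConvexOn ℝ Set.univ f) (a : E) :
    ConvexOn ℝ Set.univ (fun z => f z - ⟪a, z⟫) := by
  refine ⟨convex_univ, fun x _ y _ u v hu hv huv => ?_⟩
  have h1 := hf.2 (Set.mem_univ x) (Set.mem_univ y) hu hv huv
  simp only [smul_eq_mul] at h1 ⊢
  rw [inner_add_right, real_inner_smul_right, real_inner_smul_right]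
  linarith [h1]

lemma cocoercive (f : E → ℝ) (G : E → E) (hG : ∀ z, HasGradientAt f (G z) z)
    (hc : ConvexOn ℝ Set.univ f) (lam : ℝ) (hlam : 0 < lam)
    (hs : ∀ z h, f (z + h) ≤ f z + ⟪G z, h⟫ + lam / 2 * ‖h‖ ^ 2) (x y : E) :
    ‖G x - G y‖ ^ 2 ≤ 2 * lam * (f x - f y - ⟪G y, x - y⟫) := by
  set φ : E → ℝ := fun z => f z - ⟪G y, z⟫ with hφ
  have hGφ : ∀ z, HasGradientAt φ (G z - G y) z := by
    intro z
    rw [hasGradientAt_iff_hasFDerivAt, map_sub]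
    exact (hasGradientAt_iff_hasFDerivAt.mp (hG z)).sub (toDual ℝ E (G y)).hasFDerivAt
  have hφc : ConvexOn ℝ Set.univ φ := convexOn_sub_inner f hc (G y)
  have hmin : ∀ z, φ y ≤ φ z := by
    intro z
    have := tangent_line_le φ hφc (G y - G y) (hGφ y) z
    simpa using this
  set g : E := G x - G y with hg
  have key := hmin (x + (-lam⁻¹) • g)
  have h2 := hs x ((-lam⁻¹) • g)
  have h3 : φ (x + (-lam⁻¹) • g) = f (x + (-lam⁻¹) • g) - ⟪G y, x⟫ - ⟪G y, (-lam⁻¹) • g⟫ := by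
    rw [hφ]; simp only [inner_add_right]; ring
  have h4 : ⟪G x, (-lam⁻¹) • g⟫ - ⟪G y, (-lam⁻¹) • g⟫ = -lam⁻¹ * ‖g‖ ^ 2 := by
    rw [real_inner_smul_right, real_inner_smul_right, ← mul_sub, ← inner_sub_left, ← hg,
      real_inner_self_eq_norm_sq]
  have h5 : ‖(-lam⁻¹) • g‖ ^ 2 = lam⁻¹ ^ 2 * ‖g‖ ^ 2 := by
    rw [norm_smul, Real.norm_eq_abs, abs_neg, abs_of_pos (inv_pos.mpr hlam)]; ring
  have h6 : φ y = f y - ⟪G y, y⟫ := rfl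
  have h7 : φ x = f x - ⟪G y, x⟫ := rfl
  have h8 : ⟪G y, x - y⟫ = ⟪G y, x⟫ - ⟪G y, y⟫ := inner_sub_right _ _ _
  have hlam' : lam⁻¹ * lam = 1 := inv_mul_cancel₀ (ne_of_gt hlam)
  have hl0 : lam ≠ 0 := ne_of_gt hlam
  have h9 : φ y ≤ φ x - lam⁻¹ * ‖g‖ ^ 2 + lam / 2 * (lam⁻¹ ^ 2 * ‖g‖ ^ 2) := by
    have := key
    rw [h3] at this
    rw [h5] at h2
    linarith [h2, h4, h7.symm ▸ (le_refl (φ x))]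
  have h10 : lam / 2 * (lam⁻¹ ^ 2 * ‖g‖ ^ 2) = lam⁻¹ / 2 * ‖g‖ ^ 2 := by
    field_simp
  have h12 : lam⁻¹ / 2 * ‖g‖ ^ 2 ≤ φ x - φ y := by
    rw [h10] at h9; linarith
  have h13 := mul_le_mul_of_nonneg_left h12 (by positivity : (0:ℝ) ≤ 2 * lam)
  have hfin : 2 * lam * (lam⁻¹ / 2 * ‖g‖ ^ 2) = (lam * lam⁻¹) * ‖g‖ ^ 2 := by ring
  rw [mul_inv_cancel₀ hl0, one_mul] at hfin
  have hr : 2 * lam * (φ x - φ y) = 2 * lam * (f x - f y - ⟪G y, x - y⟫) := by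
    rw [h6, h7, h8]; ring
  rw [hfin, hr] at h13
  exact h13

lemma quadForm_continuous {d : ℕ} (A : Matrix (Fin d) (Fin d) ℝ) :
    Continuous (fun x : EuclideanSpace ℝ (Fin d) => ∑ j, ∑ k, A j k * x k * x j) := by
  fun_prop

lemma lamMax_set_eq {d : ℕ} (A : Matrix (Fin d) (Fin d) ℝ) :
    {r : ℝ | ∃ x : EuclideanSpace ℝ (Fin d), ‖x‖ = 1 ∧ r = ∑ j, ∑ k, A j k * x k * x j}
      = (fun x : EuclideanSpace ℝ (Fin d) => ∑ j, ∑ k, A j k * x k * x j) ''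
          (Metric.sphere 0 1) := by
  ext r
  simp only [Set.mem_setOf_eq, Set.mem_image, mem_sphere_iff_norm, sub_zero]
  constructor
  · rintro ⟨x, hx, rfl⟩; exact ⟨x, hx, rfl⟩
  · rintro ⟨x, hx, rfl⟩; exact ⟨x, hx, rfl⟩

lemma lamMax_bddAbove {d : ℕ} (A : Matrix (Fin d) (Fin d) ℝ) :
    BddAbove {r : ℝ | ∃ x : EuclideanSpace ℝ (Fin d), ‖x‖ = 1 ∧
      r = ∑ j, ∑ k, A j k * x k * x j} := by
  rw [lamMax_set_eq]
  exact ((isCompact_sphere 0 1).image (quadForm_continuous A)).bddAbove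

lemma quad_le_lamMax {d : ℕ} (A : Matrix (Fin d) (Fin d) ℝ) (h : EuclideanSpace ℝ (Fin d)) :
    ∑ j, ∑ k, A j k * h k * h j ≤ lamMax A * ‖h‖ ^ 2 := by
  rcases eq_or_ne h 0 with rfl | hne
  · simp
  · have hn : ‖h‖ ≠ 0 := norm_ne_zero_iff.mpr hne
    set u : EuclideanSpace ℝ (Fin d) := ‖h‖⁻¹ • h with hu
    have hun : ‖u‖ = 1 := by
      rw [hu, norm_smul, norm_inv, norm_norm, inv_mul_cancel₀ hn]
    have hmem : (∑ j, ∑ k, A j k * u k * u j) ≤ lamMax A :=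
      le_csSup (lamMax_bddAbove A) ⟨u, hun, rfl⟩
    have hexp : ∑ j, ∑ k, A j k * h k * h j = ‖h‖ ^ 2 * ∑ j, ∑ k, A j k * u k * u j := by
      rw [Finset.mul_sum]
      refine Finset.sum_congr rfl fun j _ => ?_
      rw [Finset.mul_sum]
      refine Finset.sum_congr rfl fun k _ => ?_
      have huk : ∀ m, u m = ‖h‖⁻¹ * h m := fun m => rfl
      rw [huk, huk]
      field_simp
    rw [hexp]
    calc ‖h‖ ^ 2 * ∑ j, ∑ k, A j k * u k * u j ≤ ‖h‖ ^ 2 * lamMax A :=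
          mul_le_mul_of_nonneg_left hmem (by positivity)
      _ = lamMax A * ‖h‖ ^ 2 := by ring

lemma lamMax_le {d : ℕ} (A : Matrix (Fin d) (Fin d) ℝ) (B : ℝ) (hB : 0 ≤ B)
    (h : ∀ x : EuclideanSpace ℝ (Fin d), ‖x‖ = 1 → ∑ j, ∑ k, A j k * x k * x j ≤ B) :
    lamMax A ≤ B := by
  apply Real.sSup_le _ hB
  rintro r ⟨x, hx, rfl⟩
  exact h x hx

lemma lamMax_nonneg {d : ℕ} (A : Matrix (Fin d) (Fin d) ℝ)
    (hA : ∀ x : EuclideanSpace ℝ (Fin d), 0 ≤ ∑ j, ∑ k, A j k * x k * x j) : 0 ≤ lamMax A := by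
  rcases Nat.eq_zero_or_pos d with hd | hd
  · subst hd
    have : {r : ℝ | ∃ x : EuclideanSpace ℝ (Fin 0), ‖x‖ = 1 ∧
        r = ∑ j, ∑ k, A j k * x k * x j} = ∅ := by
      ext r
      simp only [Set.mem_setOf_eq, Set.mem_empty_iff_false, iff_false]
      rintro ⟨x, hx, -⟩
      have : x = 0 := by ext i; exact absurd i.2 (by omega)
      rw [this, norm_zero] at hx
      exact one_ne_zero hx.symm
    rw [lamMax, this, Real.sSup_empty]
  · set e : EuclideanSpace ℝ (Fin d) := EuclideanSpace.single ⟨0, hd⟩ 1 with he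
    have hen : ‖e‖ = 1 := by rw [he, EuclideanSpace.norm_single, norm_one]
    exact le_trans (hA e) (le_csSup (lamMax_bddAbove A) ⟨e, hen, rfl⟩)

lemma lamMax_pos {d : ℕ} (hd : 0 < d) (A : Matrix (Fin d) (Fin d) ℝ)
    (hA : ∀ x : EuclideanSpace ℝ (Fin d), x ≠ 0 → 0 < ∑ j, ∑ k, A j k * x k * x j) :
    0 < lamMax A := by
  set e : EuclideanSpace ℝ (Fin d) := EuclideanSpace.single ⟨0, hd⟩ 1 with he
  have hen : ‖e‖ = 1 := by rw [he, EuclideanSpace.norm_single, norm_one]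
  have hne : e ≠ 0 := by
    intro h0; rw [h0, norm_zero] at hen; exact one_ne_zero hen.symm
  exact lt_of_lt_of_le (hA e hne) (le_csSup (lamMax_bddAbove A) ⟨e, hen, rfl⟩)

lemma posDef_quad_pos {d : ℕ} (M : Matrix (Fin d) (Fin d) ℝ) (hM : M.PosDef)
    (x : EuclideanSpace ℝ (Fin d)) (hx : x ≠ 0) :
    0 < ∑ j, ∑ k, M j k * x k * x j := by
  have hx' : (x : Fin d → ℝ) ≠ 0 := by intro h; apply hx; ext i; simp [h]
  have := hM.dotProduct_mulVec_pos hx'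
  simp only [dotProduct, Matrix.mulVec, RCLike.re_to_real] at this
  refine lt_of_lt_of_eq this (Eq.symm ?_)
  refine Finset.sum_congr rfl fun j _ => ?_
  rw [star_trivial, Finset.mul_sum]
  exact Finset.sum_congr rfl fun k _ => by ring

lemma posDef_quad_nonneg {d : ℕ} (M : Matrix (Fin d) (Fin d) ℝ) (hM : M.PosDef)
    (x : EuclideanSpace ℝ (Fin d)) : 0 ≤ ∑ j, ∑ k, M j k * x k * x j := by
  rcases eq_or_ne x 0 with rfl | hx
  · simp
  · exact le_of_lt (posDef_quad_pos M hM x hx)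

lemma sum_filter_swap {n : ℕ} (P : Finset (Fin n) → Prop) [DecidablePred P]
    (a : Finset (Fin n) → Fin n → ℝ) :
    ∑ C ∈ Finset.univ.filter P, ∑ i ∈ C, a C i
      = ∑ i : Fin n, ∑ C ∈ Finset.univ.filter (fun C => P C ∧ i ∈ C), a C i := by
  calc ∑ C ∈ Finset.univ.filter P, ∑ i ∈ C, a C i
      = ∑ C ∈ Finset.univ.filter P, ∑ i : Fin n, if i ∈ C then a C i else 0 := by
        refine Finset.sum_congr rfl fun C _ => ?_
        rw [Finset.sum_ite_mem, Finset.univ_inter]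
    _ = ∑ i : Fin n, ∑ C ∈ Finset.univ.filter P, if i ∈ C then a C i else 0 := Finset.sum_comm
    _ = ∑ i : Fin n, ∑ C ∈ Finset.univ.filter (fun C => P C ∧ i ∈ C), a C i := by
        refine Finset.sum_congr rfl fun i _ => ?_
        rw [← Finset.sum_filter, Finset.filter_filter]

end Helpers

/-- **Theorem 4 (expected smoothness for arbitrary samplings).** Let `S` be a proper sampling
with weights `p_C`, marginals `p_i` and pairwise marginals `P_ij`, and `v(C)_i = 1_{i∈C}/p_i`.
If each `f_i` is convex and `M_i`-smooth and `∇f(x*) = 0`, then for all `x`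
`Σ_C p_C ‖∇f_{v(C)}(x) − ∇f_{v(C)}(x*)‖² ≤ 2 𝓛_max (f(x) − f(x*))`, where
`𝓛_max = max_i Σ_{C∋i} (p_C/p_i) L_C` and `L_C = (1/n) λmax(Σ_{j∈C} M_j/p_j)`; moreover
`𝓛_max ≤ (1/n) max_i Σ_j P_ij λmax(M_j)/(p_i p_j)`. -/
theorem expected_smoothness_arbitrary_sampling
    {d n : ℕ} (hn : 0 < n)
    (p : Finset (Fin n) → ℝ)
    (hp0 : ∀ C, 0 ≤ p C)
    (hpsum : ∑ C : Finset (Fin n), p C = 1)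
    (q : Fin n → ℝ)
    (hq : ∀ i, q i = ∑ C ∈ Finset.univ.filter (fun C : Finset (Fin n) => i ∈ C), p C)
    (hproper : ∀ i, 0 < q i)
    (Pm : Fin n → Fin n → ℝ)
    (hPm : ∀ i j, Pm i j = ∑ C ∈ Finset.univ.filter (fun C : Finset (Fin n) => i ∈ C ∧ j ∈ C), p C)
    (f : Fin n → EuclideanSpace ℝ (Fin d) → ℝ)
    (hdiff : ∀ i, Differentiable ℝ (f i))
    (hconv : ∀ i, ConvexOn ℝ Set.univ (f i))
    (M : Fin n → Matrix (Fin d) (Fin d) ℝ)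
    (hMpd : ∀ i, (M i).PosDef)
    (hsmooth : ∀ i (x h : EuclideanSpace ℝ (Fin d)),
      f i (x + h) ≤ f i x + ⟪gradient (f i) x, h⟫ + (1 / 2) * ∑ j, ∑ k, M i j k * h k * h j)
    (F : EuclideanSpace ℝ (Fin d) → ℝ)
    (hF : ∀ x, F x = (1 / (n : ℝ)) * ∑ i, f i x)
    (xstar : EuclideanSpace ℝ (Fin d))
    (hcrit : gradient F xstar = 0)
    (gC : Finset (Fin n) → EuclideanSpace ℝ (Fin d) → EuclideanSpace ℝ (Fin d))
    (hgC : ∀ C x, gC C x = ((n : ℝ)⁻¹) • ∑ i ∈ C, (q i)⁻¹ • gradient (f i) x)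
    (LC : Finset (Fin n) → ℝ)
    (hLC : ∀ C, LC C = (1 / (n : ℝ)) * lamMax (∑ j ∈ C, (q j)⁻¹ • M j))
    (Lmax : ℝ)
    (hLmax : Lmax = ⨆ i : Fin n,
      ∑ C ∈ Finset.univ.filter (fun C : Finset (Fin n) => i ∈ C), (p C / q i) * LC C) :
    (∀ x, ∑ C : Finset (Fin n), p C * ‖gC C x - gC C xstar‖ ^ 2
        ≤ 2 * Lmax * (F x - F xstar))
      ∧ Lmax ≤ (1 / (n : ℝ)) * ⨆ i : Fin n, ∑ j, Pm i j * lamMax (M j) / (q i * q j) := by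
  classical
  haveI : Nonempty (Fin n) := ⟨⟨0, hn⟩⟩
  have hnR : (0:ℝ) < n := Nat.cast_pos.mpr hn
  have hnne : (n:ℝ) ≠ 0 := ne_of_gt hnR
  have hq0 : ∀ i, (q i : ℝ) ≠ 0 := fun i => ne_of_gt (hproper i)
  have hqinv : ∀ i, 0 ≤ (q i)⁻¹ := fun i => le_of_lt (inv_pos.mpr (hproper i))
  have hentry : ∀ (C : Finset (Fin n)) (j k : Fin d),
      (∑ i ∈ C, (q i)⁻¹ • M i) j k = ∑ i ∈ C, (q i)⁻¹ * M i j k := by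
    intro C j k
    simp [Matrix.sum_apply]
  have hQsum : ∀ (C : Finset (Fin n)) (h : EuclideanSpace ℝ (Fin d)),
      (∑ j, ∑ k, (∑ i ∈ C, (q i)⁻¹ • M i) j k * h k * h j)
        = ∑ i ∈ C, (q i)⁻¹ * ∑ j, ∑ k, M i j k * h k * h j := by
    intro C h
    calc ∑ j, ∑ k, (∑ i ∈ C, (q i)⁻¹ • M i) j k * h k * h j
        = ∑ j, ∑ k, ∑ i ∈ C, (q i)⁻¹ * M i j k * h k * h j := by
          refine Finset.sum_congr rfl fun j _ => Finset.sum_congr rfl fun k _ => ?_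
          rw [hentry, Finset.sum_mul, Finset.sum_mul]
      _ = ∑ j, ∑ i ∈ C, ∑ k, (q i)⁻¹ * M i j k * h k * h j := by
          exact Finset.sum_congr rfl fun j _ => Finset.sum_comm
      _ = ∑ i ∈ C, ∑ j, ∑ k, (q i)⁻¹ * M i j k * h k * h j := Finset.sum_comm
      _ = ∑ i ∈ C, (q i)⁻¹ * ∑ j, ∑ k, M i j k * h k * h j := by
          refine Finset.sum_congr rfl fun i _ => ?_
          rw [Finset.mul_sum]
          refine Finset.sum_congr rfl fun j _ => ?_
          rw [Finset.mul_sum]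
          exact Finset.sum_congr rfl fun k _ => by ring
  have hlamnn : ∀ j, 0 ≤ lamMax (M j) :=
    fun j => lamMax_nonneg _ (posDef_quad_nonneg _ (hMpd j))
  have hLCle : ∀ C, LC C ≤ (1/(n:ℝ)) * ∑ j ∈ C, (q j)⁻¹ * lamMax (M j) := by
    intro C
    rw [hLC C]
    refine mul_le_mul_of_nonneg_left ?_ (by positivity)
    refine lamMax_le _ _ (Finset.sum_nonneg fun j _ => mul_nonneg (hqinv j) (hlamnn j)) ?_
    intro u hu
    rw [hQsum C u]
    refine Finset.sum_le_sum fun j _ => mul_le_mul_of_nonneg_left ?_ (hqinv j)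
    have := quad_le_lamMax (M j) u
    rwa [hu, one_pow, mul_one] at this
  -- Part 2
  have part2 : Lmax ≤ (1 / (n : ℝ)) * ⨆ i : Fin n, ∑ j, Pm i j * lamMax (M j) / (q i * q j) := by
    have hTbdd : BddAbove (Set.range fun i : Fin n =>
        ∑ j, Pm i j * lamMax (M j) / (q i * q j)) := Set.Finite.bddAbove (Set.finite_range _)
    rw [hLmax]
    refine ciSup_le fun i => ?_
    have step1 : ∑ C ∈ Finset.univ.filter (fun C : Finset (Fin n) => i ∈ C), (p C / q i) * LC C
        ≤ ∑ C ∈ Finset.univ.filter (fun C : Finset (Fin n) => i ∈ C),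
            (p C / q i) * ((1/(n:ℝ)) * ∑ j ∈ C, (q j)⁻¹ * lamMax (M j)) :=
      Finset.sum_le_sum fun C _ => mul_le_mul_of_nonneg_left (hLCle C)
        (div_nonneg (hp0 C) (le_of_lt (hproper i)))
    have step2 : ∑ C ∈ Finset.univ.filter (fun C : Finset (Fin n) => i ∈ C),
          (p C / q i) * ((1/(n:ℝ)) * ∑ j ∈ C, (q j)⁻¹ * lamMax (M j))
        = (1/(n:ℝ)) * ∑ j, Pm i j * lamMax (M j) / (q i * q j) := by
      have e1 : ∑ C ∈ Finset.univ.filter (fun C : Finset (Fin n) => i ∈ C),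
            (p C / q i) * ((1/(n:ℝ)) * ∑ j ∈ C, (q j)⁻¹ * lamMax (M j))
          = ∑ C ∈ Finset.univ.filter (fun C : Finset (Fin n) => i ∈ C),
              ∑ j ∈ C, (p C / q i) * (1/(n:ℝ)) * ((q j)⁻¹ * lamMax (M j)) := by
        refine Finset.sum_congr rfl fun C _ => ?_
        rw [Finset.mul_sum, Finset.mul_sum]
        exact Finset.sum_congr rfl fun j _ => by ring
      rw [e1, sum_filter_swap (fun C : Finset (Fin n) => i ∈ C)
        (fun C j => (p C / q i) * (1/(n:ℝ)) * ((q j)⁻¹ * lamMax (M j))), Finset.mul_sum]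
      refine Finset.sum_congr rfl fun j _ => ?_
      rw [hPm i j, Finset.sum_mul, Finset.sum_div, Finset.mul_sum]
      refine Finset.sum_congr rfl fun C _ => ?_
      field_simp
    calc ∑ C ∈ Finset.univ.filter (fun C : Finset (Fin n) => i ∈ C), (p C / q i) * LC C
        ≤ (1/(n:ℝ)) * ∑ j, Pm i j * lamMax (M j) / (q i * q j) := le_trans step1 (le_of_eq step2)
      _ ≤ (1/(n:ℝ)) * ⨆ i : Fin n, ∑ j, Pm i j * lamMax (M j) / (q i * q j) :=
          mul_le_mul_of_nonneg_left (le_ciSup hTbdd i) (by positivity)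
  refine ⟨?_, part2⟩
  intro x
  rcases Nat.eq_zero_or_pos d with hd0 | hd
  · subst hd0
    haveI : Subsingleton (EuclideanSpace ℝ (Fin 0)) :=
      ⟨fun a b => by ext i; exact absurd i.2 (by omega)⟩
    have hxx : x = xstar := Subsingleton.elim x xstar
    rw [hxx]
    simp
  · -- main case
    have hGi : ∀ i (y : EuclideanSpace ℝ (Fin d)), HasGradientAt (f i) (gradient (f i) y) y :=
      fun i y => ((hdiff i) y).hasGradientAt
    have hFalt : F = fun y => (1/(n:ℝ)) * ∑ i ∈ Finset.univ, (1:ℝ) * f i y :=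
      funext fun y => by rw [hF y]; simp
    have hFG : HasGradientAt F ((1/(n:ℝ)) • ∑ i ∈ Finset.univ, (1:ℝ) • gradient (f i) xstar)
        xstar := by
      rw [hFalt]
      exact hasGradientAt_comb Finset.univ _ _ _ _ _ (fun i _ => hGi i xstar)
    have hsum0 : ∑ i : Fin n, gradient (f i) xstar = 0 := by
      have h1 := hFG.gradient
      rw [hcrit] at h1
      have h2 : (1/(n:ℝ)) • ∑ i : Fin n, (1:ℝ) • gradient (f i) xstar = 0 := h1.symm
      simp only [one_smul] at h2
      rcases smul_eq_zero.mp h2 with h | h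
      · exact absurd h (by positivity)
      · exact h
    set D : Fin n → ℝ := fun i => f i x - f i xstar - ⟪gradient (f i) xstar, x - xstar⟫
      with hDdef
    have hD0 : ∀ i, 0 ≤ D i := by
      intro i
      have := tangent_line_le (f i) (hconv i) _ (hGi i xstar) x
      simp only [hDdef]
      linarith
    have hsumD : ∑ i, D i = (n:ℝ) * (F x - F xstar) := by
      have h1 : ∑ i, D i = (∑ i, f i x) - (∑ i, f i xstar)
          - ⟪∑ i, gradient (f i) xstar, x - xstar⟫ := by
        rw [sum_inner]
        simp only [hDdef]
        rw [Finset.sum_sub_distrib, Finset.sum_sub_distrib]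
      rw [h1, hsum0, inner_zero_left, sub_zero, hF x, hF xstar]
      field_simp
    have perC : ∀ C : Finset (Fin n), p C * ‖gC C x - gC C xstar‖^2
        ≤ p C * (2 * LC C * ((n:ℝ)⁻¹ * ∑ i ∈ C, (q i)⁻¹ * D i)) := by
      intro C
      rcases C.eq_empty_or_nonempty with rfl | hCne
      · simp [hgC]
      · refine mul_le_mul_of_nonneg_left ?_ (hp0 C)
        set Gv : EuclideanSpace ℝ (Fin d) → EuclideanSpace ℝ (Fin d) :=
          fun y => (n:ℝ)⁻¹ • ∑ i ∈ C, (q i)⁻¹ • gradient (f i) y with hGvdef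
        have hgCG : ∀ y, gC C y = Gv y := fun y => by rw [hgC, hGvdef]
        set fv : EuclideanSpace ℝ (Fin d) → ℝ :=
          fun y => (n:ℝ)⁻¹ * ∑ i ∈ C, (q i)⁻¹ * f i y with hfvdef
        have hGv : ∀ y, HasGradientAt fv (Gv y) y :=
          fun y => hasGradientAt_comb C _ _ _ _ y (fun i _ => hGi i y)
        have hconvv : ConvexOn ℝ Set.univ fv :=
          convexOn_comb C _ (by positivity) _ hqinv f hconv
        have hlampos : 0 < LC C := by
          rw [hLC]
          refine mul_pos (by positivity) ?_
          refine lamMax_pos hd _ ?_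
          intro u hu
          rw [hQsum C u]
          exact Finset.sum_pos (fun j _ => mul_pos (inv_pos.mpr (hproper j))
            (posDef_quad_pos _ (hMpd j) u hu)) hCne
        have hinnerGv : ∀ (y w : EuclideanSpace ℝ (Fin d)),
            ⟪Gv y, w⟫ = (n:ℝ)⁻¹ * ∑ i ∈ C, (q i)⁻¹ * ⟪gradient (f i) y, w⟫ := by
          intro y w
          rw [hGvdef]
          rw [real_inner_smul_left, sum_inner]
          congr 1
          exact Finset.sum_congr rfl fun i _ => real_inner_smul_left _ _ _
        have hsmoothv : ∀ y h, fv (y + h) ≤ fv y + ⟪Gv y, h⟫ + (LC C)/2 * ‖h‖^2 := by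
          intro y h
          have hstep : ∑ i ∈ C, (q i)⁻¹ * f i (y+h)
              ≤ ∑ i ∈ C, (q i)⁻¹ * (f i y + ⟪gradient (f i) y, h⟫
                  + (1/2) * ∑ j, ∑ k, M i j k * h k * h j) :=
            Finset.sum_le_sum fun i _ => mul_le_mul_of_nonneg_left (hsmooth i y h) (hqinv i)
          have hquad : ∑ i ∈ C, (q i)⁻¹ * ∑ j, ∑ k, M i j k * h k * h j
              ≤ ((n:ℝ) * LC C) * ‖h‖^2 := by
            rw [← hQsum C h]
            have h3 := quad_le_lamMax (∑ i ∈ C, (q i)⁻¹ • M i) h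
            have h4 : lamMax (∑ i ∈ C, (q i)⁻¹ • M i) = (n:ℝ) * LC C := by
              rw [hLC]; field_simp
            rwa [h4] at h3
          have hexp : ∑ i ∈ C, (q i)⁻¹ * (f i y + ⟪gradient (f i) y, h⟫
                  + (1/2) * ∑ j, ∑ k, M i j k * h k * h j)
              = (∑ i ∈ C, (q i)⁻¹ * f i y) + (∑ i ∈ C, (q i)⁻¹ * ⟪gradient (f i) y, h⟫)
                + (1/2) * ∑ i ∈ C, (q i)⁻¹ * ∑ j, ∑ k, M i j k * h k * h j := by
            rw [Finset.mul_sum, ← Finset.sum_add_distrib, ← Finset.sum_add_distrib]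
            exact Finset.sum_congr rfl fun i _ => by ring
          have hmono := mul_le_mul_of_nonneg_left hstep
            (le_of_lt (inv_pos.mpr hnR) : (0:ℝ) ≤ (n:ℝ)⁻¹)
          rw [hexp] at hmono
          have hfinal : (n:ℝ)⁻¹ * ((∑ i ∈ C, (q i)⁻¹ * f i y)
                + (∑ i ∈ C, (q i)⁻¹ * ⟪gradient (f i) y, h⟫)
                + (1/2) * ∑ i ∈ C, (q i)⁻¹ * ∑ j, ∑ k, M i j k * h k * h j)
              ≤ fv y + ⟪Gv y, h⟫ + (LC C)/2 * ‖h‖^2 := by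
            rw [hinnerGv y h]
            have hq2 := mul_le_mul_of_nonneg_left hquad
              (by positivity : (0:ℝ) ≤ (n:ℝ)⁻¹ * (1/2))
            have hid : (n:ℝ)⁻¹ * (1/2) * ((n:ℝ) * LC C * ‖h‖^2) = (LC C)/2 * ‖h‖^2 := by
              field_simp
            rw [hid] at hq2
            have : fv y = (n:ℝ)⁻¹ * ∑ i ∈ C, (q i)⁻¹ * f i y := rfl
            rw [this]
            ring_nf
            ring_nf at hq2
            linarith [hq2]
          calc fv (y + h) = (n:ℝ)⁻¹ * ∑ i ∈ C, (q i)⁻¹ * f i (y+h) := rfl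
            _ ≤ _ := hmono
            _ ≤ fv y + ⟪Gv y, h⟫ + (LC C)/2 * ‖h‖^2 := hfinal
        have hco := cocoercive fv Gv hGv hconvv (LC C) hlampos hsmoothv x xstar
        have hBreg : fv x - fv xstar - ⟪Gv xstar, x - xstar⟫
            = (n:ℝ)⁻¹ * ∑ i ∈ C, (q i)⁻¹ * D i := by
          rw [hinnerGv xstar (x - xstar)]
          have : fv x = (n:ℝ)⁻¹ * ∑ i ∈ C, (q i)⁻¹ * f i x := rfl
          have h2 : fv xstar = (n:ℝ)⁻¹ * ∑ i ∈ C, (q i)⁻¹ * f i xstar := rfl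
          rw [this, h2, ← mul_sub, ← mul_sub, ← Finset.sum_sub_distrib,
            ← Finset.sum_sub_distrib]
          congr 1
          refine Finset.sum_congr rfl fun i _ => ?_
          simp only [hDdef]
          ring
        rw [hgCG, hgCG, ← hBreg]
        exact hco
    have hsum1 := Finset.sum_le_sum (fun C (_ : C ∈ Finset.univ) => perC C)
    have hflat : ∑ C : Finset (Fin n), p C * (2 * LC C * ((n:ℝ)⁻¹ * ∑ i ∈ C, (q i)⁻¹ * D i))
        = ∑ i, (∑ C ∈ Finset.univ.filter (fun C : Finset (Fin n) => i ∈ C), p C * LC C)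
            * ((2*(n:ℝ)⁻¹) * ((q i)⁻¹ * D i)) := by
      have e1 : ∑ C : Finset (Fin n), p C * (2 * LC C * ((n:ℝ)⁻¹ * ∑ i ∈ C, (q i)⁻¹ * D i))
          = ∑ C ∈ Finset.univ.filter (fun _ : Finset (Fin n) => True),
              ∑ i ∈ C, (p C * LC C) * ((2*(n:ℝ)⁻¹) * ((q i)⁻¹ * D i)) := by
        rw [Finset.filter_true]
        refine Finset.sum_congr rfl fun C _ => ?_
        rw [show p C * (2 * LC C * ((n:ℝ)⁻¹ * ∑ i ∈ C, (q i)⁻¹ * D i))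
            = (p C * LC C) * ((2*(n:ℝ)⁻¹) * ∑ i ∈ C, (q i)⁻¹ * D i) from by ring,
          Finset.mul_sum, Finset.mul_sum]
      rw [e1, sum_filter_swap (fun _ : Finset (Fin n) => True)
        (fun C i => (p C * LC C) * ((2*(n:ℝ)⁻¹) * ((q i)⁻¹ * D i)))]
      simp only [true_and]
      exact Finset.sum_congr rfl fun i _ => (Finset.sum_mul _ _ _).symm
    have hbound : ∀ i : Fin n,
        (∑ C ∈ Finset.univ.filter (fun C : Finset (Fin n) => i ∈ C), p C * LC C)
          ≤ q i * Lmax := by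
      intro i
      have hLm_i : ∑ C ∈ Finset.univ.filter (fun C : Finset (Fin n) => i ∈ C),
          (p C / q i) * LC C ≤ Lmax := by
        rw [hLmax]
        have hbdd2 : BddAbove (Set.range fun i : Fin n => ∑ C ∈ Finset.univ.filter
            (fun C : Finset (Fin n) => i ∈ C), (p C / q i) * LC C) :=
          Set.Finite.bddAbove (Set.finite_range _)
        exact le_ciSup hbdd2 i
      have heq : ∑ C ∈ Finset.univ.filter (fun C : Finset (Fin n) => i ∈ C), p C * LC C
          = q i * ∑ C ∈ Finset.univ.filter (fun C : Finset (Fin n) => i ∈ C),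
              (p C / q i) * LC C := by
        rw [Finset.mul_sum]
        refine Finset.sum_congr rfl fun C _ => ?_
        field_simp
        rw [mul_div_cancel_right₀ _ (hq0 i)]
      rw [heq]
      exact mul_le_mul_of_nonneg_left hLm_i (le_of_lt (hproper i))
    calc ∑ C : Finset (Fin n), p C * ‖gC C x - gC C xstar‖ ^ 2
        ≤ ∑ C : Finset (Fin n), p C * (2 * LC C * ((n:ℝ)⁻¹ * ∑ i ∈ C, (q i)⁻¹ * D i)) := hsum1
      _ = ∑ i, (∑ C ∈ Finset.univ.filter (fun C : Finset (Fin n) => i ∈ C), p C * LC C)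
            * ((2*(n:ℝ)⁻¹) * ((q i)⁻¹ * D i)) := hflat
      _ ≤ ∑ i, (q i * Lmax) * ((2*(n:ℝ)⁻¹) * ((q i)⁻¹ * D i)) :=
          Finset.sum_le_sum fun i _ => mul_le_mul_of_nonneg_right (hbound i)
            (mul_nonneg (by positivity) (mul_nonneg (hqinv i) (hD0 i)))
      _ = 2 * Lmax * ((n:ℝ)⁻¹ * ∑ i, D i) := by
          rw [Finset.mul_sum, Finset.mul_sum]
          refine Finset.sum_congr rfl fun i _ => ?_
          field_simp [hq0 i]
      _ = 2 * Lmax * (F x - F xstar) := by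
          rw [hsumD, ← mul_assoc ((n:ℝ)⁻¹), inv_mul_cancel₀ hnne, one_mul]
end

section
/- Let S be an independent sampling on {1, …, n} with inclusion probabilities 0 < p_i ≤ 1 (i.e., p_C = Π_{i∈C} p_i · Π_{i∉C} (1 − p_i)), let x* ∈ ℝ^d with Σ_{i=1}^n ∇f_i(x*) = 0, and write h_i = ∇f_i(x*). Then σ² := Σ_C p_C ‖∇f_{v(C)}(x*)‖² = (1/n²) Σ_{i=1}^n ((1 − p_i)/p_i) ‖h_i‖². -/
/-!
Expanding the square turns `σ²` into `∑ᵢ ∑ⱼ P(i, j ∈ C) ⟪aᵢ, aⱼ⟫` with `aᵢ = hᵢ / (n pᵢ)`.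
For an independent sampling `P(i, j ∈ C) = pᵢ pⱼ + [i = j] pᵢ (1 - pᵢ)`, so `σ²` splits as
`‖∑ᵢ pᵢ aᵢ‖² + ∑ᵢ pᵢ (1 - pᵢ) ‖aᵢ‖²`, and the first term is `‖(1/n) ∑ᵢ hᵢ‖² = 0`.
-/

open Finset RealInnerProductSpace

variable {ι : Type*} [Fintype ι] [DecidableEq ι]

def indepSamplingProb {R : Type*} [CommRing R] (pr : ι → R) (C : Finset ι) : R :=
  (∏ i ∈ C, pr i) * ∏ i ∈ Cᶜ, (1 - pr i)

section IndepSampling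

variable {R : Type*} [CommRing R] (pr : ι → R)

theorem sum_filter_superset_indepSamplingProb (S : Finset ι) :
    ∑ C with S ⊆ C, indepSamplingProb pr C = ∏ i ∈ S, pr i := by
  -- expand `∏ᵢ (prᵢ + gᵢ)` over subsets `C`: the factor `∏_{Cᶜ} g` vanishes unless `S ⊆ C`
  set g : ι → R := fun i => if i ∈ S then 0 else 1 - pr i
  have hg (C : Finset ι) :
      ∏ i ∈ Cᶜ, g i = if S ⊆ C then ∏ i ∈ Cᶜ, (1 - pr i) else 0 := by
    split_ifs with hSC
    · exact prod_congr rfl fun i hi => if_neg fun hiS => mem_compl.1 hi (hSC hiS)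
    · obtain ⟨i, hiS, hiC⟩ := not_subset.1 hSC
      exact prod_eq_zero (mem_compl.2 hiC) (if_pos hiS)
  calc ∑ C with S ⊆ C, indepSamplingProb pr C
      = ∏ i, (pr i + g i) := by
        simp only [prod_add, powerset_univ, ← compl_eq_univ_sdiff, hg, mul_ite, mul_zero,
          sum_filter, indepSamplingProb]
    _ = ∏ i, if i ∈ S then pr i else 1 :=
        prod_congr rfl fun i _ => by by_cases hi : i ∈ S <;> simp [g, hi]
    _ = ∏ i ∈ S, pr i := by rw [prod_ite_mem, univ_inter]

theorem sum_filter_mem_indepSamplingProb (i : ι) :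
    ∑ C with i ∈ C, indepSamplingProb pr C = pr i := by
  simpa using sum_filter_superset_indepSamplingProb pr {i}

theorem sum_filter_mem_mem_indepSamplingProb (i j : ι) :
    ∑ C with i ∈ C ∧ j ∈ C, indepSamplingProb pr C
      = pr i * pr j + if i = j then pr i * (1 - pr i) else 0 := by
  have hpair := sum_filter_superset_indepSamplingProb pr {i, j}
  simp only [insert_subset_iff, singleton_subset_iff] at hpair
  rw [hpair]
  split_ifs with hij
  · subst hij
    rw [pair_eq_singleton, prod_singleton]
    ring
  · simp [hij]

end IndepSampling

section SecondMoment

variable {E : Type*} [NormedAddCommGroup E] [InnerProductSpace ℝ E]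

theorem sum_mul_norm_sum_sq (p : Finset ι → ℝ) (a : ι → E) :
    ∑ C, p C * ‖∑ i ∈ C, a i‖ ^ 2
      = ∑ i, ∑ j, (∑ C with i ∈ C ∧ j ∈ C, p C) * ⟪a i, a j⟫ := by
  have hnorm (C : Finset ι) :
      ‖∑ i ∈ C, a i‖ ^ 2 = ∑ i, ∑ j, if i ∈ C ∧ j ∈ C then ⟪a i, a j⟫ else 0 := by
    rw [← real_inner_self_eq_norm_sq, sum_inner]
    simp [inner_sum, ite_and]
  simp_rw [hnorm, mul_sum, sum_mul, sum_filter, mul_ite, mul_zero]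
  rw [sum_comm]
  exact sum_congr rfl fun i _ => sum_comm

theorem sum_indepSamplingProb_mul_norm_sum_sq (pr : ι → ℝ) (a : ι → E) :
    ∑ C, indepSamplingProb pr C * ‖∑ i ∈ C, a i‖ ^ 2
      = ‖∑ i, pr i • a i‖ ^ 2 + ∑ i, pr i * (1 - pr i) * ‖a i‖ ^ 2 := by
  rw [sum_mul_norm_sum_sq, ← real_inner_self_eq_norm_sq, sum_inner]
  simp_rw [sum_filter_mem_mem_indepSamplingProb, add_mul, sum_add_distrib, inner_sum,
    real_inner_smul_left, real_inner_smul_right, ite_mul, zero_mul, sum_ite_eq,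
    mem_univ, if_true, real_inner_self_eq_norm_sq]
  congr 1
  exact sum_congr rfl fun i _ => sum_congr rfl fun j _ => by ring

end SecondMoment

theorem gradient_noise_independent_sampling_general
    {d n : ℕ}
    (pr : Fin n → ℝ)
    (hpr0 : ∀ i, 0 < pr i)
    (p : Finset (Fin n) → ℝ)
    (hp : ∀ C : Finset (Fin n), p C = (∏ i ∈ C, pr i) * ∏ i ∈ Cᶜ, (1 - pr i))
    (q : Fin n → ℝ)
    (hq : ∀ i, q i = ∑ C ∈ Finset.univ.filter (fun C : Finset (Fin n) => i ∈ C), p C)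
    (f : Fin n → EuclideanSpace ℝ (Fin d) → ℝ)
    (xstar : EuclideanSpace ℝ (Fin d))
    (hsum0 : ∑ i, gradient (f i) xstar = 0)
    (h : Fin n → EuclideanSpace ℝ (Fin d))
    (hh : ∀ i, h i = gradient (f i) xstar)
    (gC : Finset (Fin n) → EuclideanSpace ℝ (Fin d) → EuclideanSpace ℝ (Fin d))
    (hgC : ∀ C x, gC C x = ((n : ℝ)⁻¹) • ∑ i ∈ C, (q i)⁻¹ • gradient (f i) x) :
    ∑ C : Finset (Fin n), p C * ‖gC C xstar‖ ^ 2
      = (1 / (n : ℝ) ^ 2) * ∑ i, ((1 - pr i) / pr i) * ‖h i‖ ^ 2 := by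
  have hp' : p = indepSamplingProb pr := funext hp
  have hq' (i : Fin n) : q i = pr i := by
    rw [hq, hp', sum_filter_mem_indepSamplingProb]
  set a : Fin n → EuclideanSpace ℝ (Fin d) := fun i => ((n : ℝ)⁻¹ * (pr i)⁻¹) • h i
  have hgCa (C : Finset (Fin n)) : gC C xstar = ∑ i ∈ C, a i := by
    simp only [hgC, hq', hh, smul_sum, smul_smul, a]
  have hmean : ∑ i, pr i • a i = 0 := by
    have hpa (i : Fin n) : pr i • a i = (n : ℝ)⁻¹ • h i := by
      rw [smul_smul, mul_left_comm, mul_inv_cancel₀ (hpr0 i).ne', mul_one]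
    simp only [hpa, ← smul_sum, hh, hsum0, smul_zero]
  simp_rw [hp', hgCa, sum_indepSamplingProb_mul_norm_sum_sq, hmean, norm_zero,
    zero_pow two_ne_zero, zero_add, mul_sum, a, norm_smul, Real.norm_eq_abs, mul_pow, sq_abs]
  refine sum_congr rfl fun i _ => ?_
  have hpri := (hpr0 i).ne'
  field_simp

/-- **Proposition 3(ii) (gradient noise for independent sampling).** Let `S` be an independent
sampling with inclusion probabilities `0 < pr_i ≤ 1`, i.e.
`p_C = Π_{i∈C} pr_i · Π_{i∉C} (1 − pr_i)`, and let `x*` satisfy `Σ_i ∇f_i(x*) = 0`, with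
`h_i = ∇f_i(x*)`. Then `σ² = Σ_C p_C ‖∇f_{v(C)}(x*)‖² = (1/n²) Σ_i ((1 − pr_i)/pr_i) ‖h_i‖²`. -/
theorem gradient_noise_independent_sampling
    {d n : ℕ}
    (pr : Fin n → ℝ)
    (hpr0 : ∀ i, 0 < pr i) (hpr1 : ∀ i, pr i ≤ 1)
    (p : Finset (Fin n) → ℝ)
    (hp : ∀ C : Finset (Fin n), p C = (∏ i ∈ C, pr i) * ∏ i ∈ Cᶜ, (1 - pr i))
    (q : Fin n → ℝ)
    (hq : ∀ i, q i = ∑ C ∈ Finset.univ.filter (fun C : Finset (Fin n) => i ∈ C), p C)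
    (f : Fin n → EuclideanSpace ℝ (Fin d) → ℝ)
    (hdiff : ∀ i, Differentiable ℝ (f i))
    (xstar : EuclideanSpace ℝ (Fin d))
    (hsum0 : ∑ i, gradient (f i) xstar = 0)
    (h : Fin n → EuclideanSpace ℝ (Fin d))
    (hh : ∀ i, h i = gradient (f i) xstar)
    (gC : Finset (Fin n) → EuclideanSpace ℝ (Fin d) → EuclideanSpace ℝ (Fin d))
    (hgC : ∀ C x, gC C x = ((n : ℝ)⁻¹) • ∑ i ∈ C, (q i)⁻¹ • gradient (f i) x) :
    ∑ C : Finset (Fin n), p C * ‖gC C xstar‖ ^ 2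
      = (1 / (n : ℝ) ^ 2) * ∑ i, ((1 - pr i) / pr i) * ‖h i‖ ^ 2 :=
  gradient_noise_independent_sampling_general pr hpr0 p hp q hq f xstar hsum0 h hh gC hgC
end

section
/- Let n ≥ 2, 1 ≤ τ ≤ n, and let S be the τ-nice sampling on {1, …, n}: p_C = 1/C(n,τ) for |C| = τ and p_C = 0 otherwise. Let x* ∈ ℝ^d with Σ_{i=1}^n ∇f_i(x*) = 0 and write h_i = ∇f_i(x*). Then σ² := Σ_C p_C ‖∇f_{v(C)}(x*)‖² = (1/(nτ)) · ((n − τ)/(n − 1)) · Σ_{i=1}^n ‖h_i‖². -/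
open Finset

private lemma countOne {n : ℕ} (τ : ℕ) (hτ : 1 ≤ τ) (i : Fin n) :
    (univ.filter (fun C : Finset (Fin n) => C.card = τ ∧ i ∈ C)).card
      = (n - 1).choose (τ - 1) := by
  have hcard : (univ.erase i).card = n - 1 := by
    rw [card_erase_of_mem (mem_univ i), card_univ, Fintype.card_fin]
  rw [← hcard, ← card_powersetCard]
  apply card_nbij' (fun C => C.erase i) (fun D => insert i D)
  · intro C hC
    simp only [mem_coe, mem_filter, mem_univ, true_and] at hC ⊢
    rw [mem_powersetCard]
    exact ⟨erase_subset_erase i (subset_univ C),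
      by rw [card_erase_of_mem hC.2, hC.1]⟩
  · intro D hD
    rw [mem_coe, mem_powersetCard] at hD
    have hiD : i ∉ D := fun hm => (mem_erase.mp (hD.1 hm)).1 rfl
    simp only [mem_coe, mem_filter, mem_univ, true_and]
    refine ⟨?_, mem_insert_self i D⟩
    rw [card_insert_of_notMem hiD, hD.2]
    omega
  · intro C hC
    simp only [mem_coe, mem_filter] at hC
    exact insert_erase hC.2.2
  · intro D hD
    rw [mem_coe, mem_powersetCard] at hD
    exact erase_insert (fun hm => (mem_erase.mp (hD.1 hm)).1 rfl)

private lemma countTwo {n : ℕ} (τ : ℕ) (hτ : 2 ≤ τ) {i j : Fin n} (hij : i ≠ j) :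
    (univ.filter (fun C : Finset (Fin n) => C.card = τ ∧ i ∈ C ∧ j ∈ C)).card
      = (n - 2).choose (τ - 2) := by
  have hji : j ∈ univ.erase i := mem_erase.mpr ⟨hij.symm, mem_univ j⟩
  have hcard : ((univ.erase i).erase j).card = n - 2 := by
    rw [card_erase_of_mem hji, card_erase_of_mem (mem_univ i), card_univ,
      Fintype.card_fin]
    omega
  rw [← hcard, ← card_powersetCard]
  apply card_nbij' (fun C => (C.erase i).erase j) (fun D => insert i (insert j D))
  · intro C hC
    simp only [mem_coe, mem_filter, mem_univ, true_and] at hC ⊢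
    rw [mem_powersetCard]
    constructor
    · exact erase_subset_erase j (erase_subset_erase i (subset_univ C))
    · rw [card_erase_of_mem (mem_erase.mpr ⟨hij.symm, hC.2.2⟩),
        card_erase_of_mem hC.2.1, hC.1]
      omega
  · intro D hD
    rw [mem_coe, mem_powersetCard] at hD
    have hjD : j ∉ D := fun hm => (mem_erase.mp (hD.1 hm)).1 rfl
    have hiD : i ∉ D := fun hm =>
      (mem_erase.mp (mem_of_mem_erase (hD.1 hm))).1 rfl
    have hi' : i ∉ insert j D := by
      simp only [mem_insert]
      rintro (hcase | hcase)
      · exact hij hcase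
      · exact hiD hcase
    simp only [mem_coe, mem_filter, mem_univ, true_and]
    refine ⟨?_, mem_insert_self i _, mem_insert_of_mem (mem_insert_self j D)⟩
    rw [card_insert_of_notMem hi', card_insert_of_notMem hjD, hD.2]
    omega
  · intro C hC
    simp only [mem_coe, mem_filter, mem_univ, true_and] at hC
    simp only [insert_erase (mem_erase.mpr ⟨hij.symm, hC.2.2⟩), insert_erase hC.2.1]
  · intro D hD
    rw [mem_coe, mem_powersetCard] at hD
    have hjD : j ∉ D := fun hm => (mem_erase.mp (hD.1 hm)).1 rfl
    have hiD : i ∉ D := fun hm =>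
      (mem_erase.mp (mem_of_mem_erase (hD.1 hm))).1 rfl
    have hi' : i ∉ insert j D := by
      simp only [mem_insert]
      rintro (hcase | hcase)
      · exact hij hcase
      · exact hiD hcase
    simp only [erase_insert hi', erase_insert hjD]

private lemma countTwoOne {n : ℕ} {i j : Fin n} (hij : i ≠ j) :
    (univ.filter (fun C : Finset (Fin n) => C.card = 1 ∧ i ∈ C ∧ j ∈ C)).card
      = 0 := by
  rw [Finset.card_eq_zero, Finset.filter_eq_empty_iff]
  rintro C - ⟨hc, hi, hj⟩
  have : 1 < C.card := Finset.one_lt_card.mpr ⟨i, hi, j, hj, hij⟩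
  omega

open scoped RealInnerProductSpace

/-- **Proposition 3(iii) (gradient noise for `τ`-nice sampling).** Let `n ≥ 2`, `1 ≤ τ ≤ n`, and
let `S` be the `τ`-nice sampling: `p_C = 1/C(n,τ)` for `|C| = τ` and `p_C = 0` otherwise. Let
`x*` satisfy `Σ_i ∇f_i(x*) = 0`, with `h_i = ∇f_i(x*)`. Then
`σ² = Σ_C p_C ‖∇f_{v(C)}(x*)‖² = (1/(nτ)) ((n − τ)/(n − 1)) Σ_i ‖h_i‖²`. -/
theorem gradient_noise_tau_nice_sampling
    {d n : ℕ} (hn : 2 ≤ n)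
    (τ : ℕ) (hτ1 : 1 ≤ τ) (hτn : τ ≤ n)
    (p : Finset (Fin n) → ℝ)
    (hp : ∀ C : Finset (Fin n),
      p C = if C.card = τ then 1 / (n.choose τ : ℝ) else 0)
    (q : Fin n → ℝ)
    (hq : ∀ i, q i = ∑ C ∈ Finset.univ.filter (fun C : Finset (Fin n) => i ∈ C), p C)
    (f : Fin n → EuclideanSpace ℝ (Fin d) → ℝ)
    (hdiff : ∀ i, Differentiable ℝ (f i))
    (xstar : EuclideanSpace ℝ (Fin d))
    (hsum0 : ∑ i, gradient (f i) xstar = 0)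
    (h : Fin n → EuclideanSpace ℝ (Fin d))
    (hh : ∀ i, h i = gradient (f i) xstar)
    (gC : Finset (Fin n) → EuclideanSpace ℝ (Fin d) → EuclideanSpace ℝ (Fin d))
    (hgC : ∀ C x, gC C x = ((n : ℝ)⁻¹) • ∑ i ∈ C, (q i)⁻¹ • gradient (f i) x) :
    ∑ C : Finset (Fin n), p C * ‖gC C xstar‖ ^ 2
      = (1 / ((n : ℝ) * (τ : ℝ))) * (((n : ℝ) - (τ : ℝ)) / ((n : ℝ) - 1))
          * ∑ i, ‖h i‖ ^ 2 := by
  classical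
  have hχ0 : ((n.choose τ : ℕ) : ℝ) ≠ 0 := by
    exact_mod_cast (Nat.choose_pos hτn).ne'
  have hn0 : (n : ℝ) ≠ 0 := by
    have : 0 < n := by omega
    exact_mod_cast this.ne'
  have hτ0 : (τ : ℝ) ≠ 0 := by
    have : 0 < τ := by omega
    exact_mod_cast this.ne'
  have hn1 : (n : ℝ) - 1 ≠ 0 := by
    have : (2:ℝ) ≤ (n:ℝ) := by exact_mod_cast hn
    linarith
  -- basic choose identity, level one
  have hAnat : n * (n - 1).choose (τ - 1) = n.choose τ * τ := by
    have key := Nat.add_one_mul_choose_eq (n - 1) (τ - 1)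
    have h1 : n - 1 + 1 = n := by omega
    have h2 : τ - 1 + 1 = τ := by omega
    simpa [Nat.succ_eq_add_one, h1, h2] using key
  have hAr : ((n - 1).choose (τ - 1) : ℝ) * (n : ℝ) = ((n.choose τ : ℕ) : ℝ) * (τ : ℝ) := by
    have h' : (n - 1).choose (τ - 1) * n = n.choose τ * τ := by
      rw [mul_comm]; exact hAnat
    exact_mod_cast h'
  -- the common value of the two-element count
  obtain ⟨M, hM, hMr⟩ :
      ∃ M : ℕ,
        (∀ i j : Fin n, i ≠ j →
          ((univ.filter (fun C : Finset (Fin n) => C.card = τ ∧ i ∈ C ∧ j ∈ C)).card = M)) ∧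
        (M : ℝ) * ((n : ℝ) - 1) = ((n - 1).choose (τ - 1) : ℝ) * ((τ : ℝ) - 1) := by
    rcases eq_or_lt_of_le hτ1 with h1 | h2
    · refine ⟨0, fun i j hij => ?_, ?_⟩
      · rw [← h1]
        exact countTwoOne hij
      · have : (τ : ℝ) = 1 := by exact_mod_cast h1.symm
        simp [this]
    · have h2' : 2 ≤ τ := h2
      refine ⟨(n - 2).choose (τ - 2), fun i j hij => countTwo τ h2' hij, ?_⟩
      have hBnat : (n - 1) * (n - 2).choose (τ - 2) = (n - 1).choose (τ - 1) * (τ - 1) := by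
        have key := Nat.add_one_mul_choose_eq (n - 2) (τ - 2)
        have h1 : n - 2 + 1 = n - 1 := by omega
        have h2 : τ - 2 + 1 = τ - 1 := by omega
        simpa [Nat.succ_eq_add_one, h1, h2] using key
      have c1 : ((n - 1 : ℕ) : ℝ) = (n : ℝ) - 1 := by
        push_cast [Nat.cast_sub (by omega : 1 ≤ n)]; ring
      have c2 : ((τ - 1 : ℕ) : ℝ) = (τ : ℝ) - 1 := by
        push_cast [Nat.cast_sub (by omega : 1 ≤ τ)]; ring
      have := congrArg (fun k : ℕ => (k : ℝ)) hBnat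
      push_cast at this
      rw [c1, c2] at this
      linarith [this]
  -- the value of q
  have hqval : ∀ i : Fin n, q i = (τ : ℝ) / (n : ℝ) := by
    intro i
    rw [hq i]
    have step1 : ∑ C ∈ univ.filter (fun C : Finset (Fin n) => i ∈ C), p C
        = ∑ C ∈ (univ.filter (fun C : Finset (Fin n) => i ∈ C)).filter
            (fun C => C.card = τ), (1 / ((n.choose τ : ℕ) : ℝ)) := by
      conv_rhs => rw [sum_filter]
      exact sum_congr rfl fun C _ => hp C
    rw [step1, filter_filter, sum_const, nsmul_eq_mul]
    have : (univ.filter fun C : Finset (Fin n) => i ∈ C ∧ C.card = τ)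
        = univ.filter fun C : Finset (Fin n) => C.card = τ ∧ i ∈ C := by
      simp [and_comm]
    rw [this, countOne τ hτ1 i]
    field_simp
    linarith [hAr]
  -- pointwise norm computation
  have hnorm : ∀ C : Finset (Fin n),
      ‖gC C xstar‖ ^ 2 = ((τ : ℝ)⁻¹) ^ 2 * ‖∑ i ∈ C, h i‖ ^ 2 := by
    intro C
    have hsmul : gC C xstar = ((τ : ℝ)⁻¹) • ∑ i ∈ C, h i := by
      rw [hgC]
      have : ∑ i ∈ C, (q i)⁻¹ • gradient (f i) xstar
          = ((n : ℝ) / (τ : ℝ)) • ∑ i ∈ C, h i := by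
        rw [smul_sum]
        refine sum_congr rfl fun i _ => ?_
        rw [hqval i, hh i, inv_div]
      rw [this, smul_smul]
      congr 1
      field_simp
    rw [hsmul, norm_smul, Real.norm_eq_abs, mul_pow, sq_abs]
  -- inner product expansion
  have hinner : ∀ C : Finset (Fin n),
      ‖∑ i ∈ C, h i‖ ^ 2 = ∑ i ∈ C, ∑ j ∈ C, ⟪h i, h j⟫ := by
    intro C
    rw [← real_inner_self_eq_norm_sq, sum_inner]
    exact sum_congr rfl fun i _ => inner_sum _ _ _
  have hzero : ∑ j, h j = 0 := by
    rw [← hsum0]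
    exact sum_congr rfl fun j _ => hh j
  -- the key combinatorial identity
  have hKey : ∑ C ∈ univ.filter (fun C : Finset (Fin n) => C.card = τ),
      ‖∑ i ∈ C, h i‖ ^ 2
      = (((n - 1).choose (τ - 1) : ℝ) - (M : ℝ)) * ∑ i, ‖h i‖ ^ 2 := by
    have expand : ∀ C ∈ univ.filter (fun C : Finset (Fin n) => C.card = τ),
        ‖∑ i ∈ C, h i‖ ^ 2
          = ∑ i, ∑ j, (if i ∈ C ∧ j ∈ C then ⟪h i, h j⟫ else 0) := by
      intro C _
      rw [hinner C]
      rw [← sum_subset (subset_univ C)]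
      · refine sum_congr rfl fun i hi => ?_
        rw [← sum_subset (subset_univ C)]
        · refine sum_congr rfl fun j hj => ?_
          simp [hi, hj]
        · intro j _ hj
          simp [hj]
      · intro i _ hi
        refine sum_eq_zero fun j _ => ?_
        simp [hi]
    rw [sum_congr rfl expand, sum_comm]
    have swap2 : ∀ i : Fin n,
        ∑ C ∈ univ.filter (fun C : Finset (Fin n) => C.card = τ),
          ∑ j, (if i ∈ C ∧ j ∈ C then ⟪h i, h j⟫ else 0)
        = ∑ j, ((univ.filter (fun C : Finset (Fin n) =>
            C.card = τ ∧ i ∈ C ∧ j ∈ C)).card : ℝ) * ⟪h i, h j⟫ := by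
      intro i
      rw [sum_comm]
      refine sum_congr rfl fun j _ => ?_
      rw [← sum_filter, filter_filter, sum_const, nsmul_eq_mul]
    rw [sum_congr rfl fun i _ => swap2 i]
    -- split diagonal
    have diag : ∀ i : Fin n,
        ∑ j, ((univ.filter (fun C : Finset (Fin n) =>
            C.card = τ ∧ i ∈ C ∧ j ∈ C)).card : ℝ) * ⟪h i, h j⟫
        = ((n - 1).choose (τ - 1) : ℝ) * ‖h i‖ ^ 2 - (M : ℝ) * ‖h i‖ ^ 2 := by
      intro i
      rw [← sum_erase_add _ _ (mem_univ i)]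
      have hdiagterm :
          ((univ.filter (fun C : Finset (Fin n) =>
            C.card = τ ∧ i ∈ C ∧ i ∈ C)).card : ℝ) * ⟪h i, h i⟫
          = ((n - 1).choose (τ - 1) : ℝ) * ‖h i‖ ^ 2 := by
        have : (univ.filter fun C : Finset (Fin n) => C.card = τ ∧ i ∈ C ∧ i ∈ C)
            = univ.filter fun C : Finset (Fin n) => C.card = τ ∧ i ∈ C := by
          simp [and_assoc]
        rw [this, countOne τ hτ1 i, real_inner_self_eq_norm_sq]
      have hoff : ∑ j ∈ univ.erase i,
          ((univ.filter (fun C : Finset (Fin n) =>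
            C.card = τ ∧ i ∈ C ∧ j ∈ C)).card : ℝ) * ⟪h i, h j⟫
          = (M : ℝ) * (- ‖h i‖ ^ 2) := by
        have : ∑ j ∈ univ.erase i,
            ((univ.filter (fun C : Finset (Fin n) =>
              C.card = τ ∧ i ∈ C ∧ j ∈ C)).card : ℝ) * ⟪h i, h j⟫
            = (M : ℝ) * ∑ j ∈ univ.erase i, ⟪h i, h j⟫ := by
          rw [mul_sum]
          refine sum_congr rfl fun j hj => ?_
          rw [hM i j (Ne.symm (mem_erase.mp hj).1)]
        rw [this]
        congr 1
        rw [sum_erase_eq_sub (mem_univ i), ← inner_sum, hzero,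
          inner_zero_right, real_inner_self_eq_norm_sq]
        ring
      rw [hdiagterm, hoff]
      ring
    rw [sum_congr rfl fun i _ => diag i, sum_sub_distrib, ← mul_sum, ← mul_sum]
    ring
  -- put everything together
  have lhs_eq : ∑ C : Finset (Fin n), p C * ‖gC C xstar‖ ^ 2
      = (1 / ((n.choose τ : ℕ) : ℝ)) * ((τ : ℝ)⁻¹) ^ 2
          * ((((n - 1).choose (τ - 1) : ℝ) - (M : ℝ)) * ∑ i, ‖h i‖ ^ 2) := by
    have : ∑ C : Finset (Fin n), p C * ‖gC C xstar‖ ^ 2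
        = ∑ C ∈ univ.filter (fun C : Finset (Fin n) => C.card = τ),
            (1 / ((n.choose τ : ℕ) : ℝ)) * (((τ : ℝ)⁻¹) ^ 2 * ‖∑ i ∈ C, h i‖ ^ 2) := by
      rw [sum_filter]
      refine sum_congr rfl fun C _ => ?_
      rw [hp C, hnorm C]
      split_ifs with hc
      · ring
      · ring
    rw [this, ← mul_sum, ← mul_sum, hKey]
    ring
  rw [lhs_eq]
  have hcoef : (1 / ((n.choose τ : ℕ) : ℝ)) * ((τ : ℝ)⁻¹) ^ 2
      * (((n - 1).choose (τ - 1) : ℝ) - (M : ℝ))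
      = (1 / ((n : ℝ) * (τ : ℝ))) * (((n : ℝ) - (τ : ℝ)) / ((n : ℝ) - 1)) := by
    field_simp
    linear_combination (-(n:ℝ)) * hMr + ((n:ℝ)-(τ:ℝ)) * hAr
  calc (1 / ((n.choose τ : ℕ) : ℝ)) * ((τ : ℝ)⁻¹) ^ 2
      * ((((n - 1).choose (τ - 1) : ℝ) - (M : ℝ)) * ∑ i, ‖h i‖ ^ 2)
      = ((1 / ((n.choose τ : ℕ) : ℝ)) * ((τ : ℝ)⁻¹) ^ 2
          * (((n - 1).choose (τ - 1) : ℝ) - (M : ℝ))) * ∑ i, ‖h i‖ ^ 2 := by ring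
    _ = (1 / ((n : ℝ) * (τ : ℝ))) * (((n : ℝ) - (τ : ℝ)) / ((n : ℝ) - 1))
          * ∑ i, ‖h i‖ ^ 2 := by rw [hcoef]
end

section
/- Let L_1, …, L_n > 0 and h_1, …, h_n ∈ ℝ^d, and define the partially biased probabilities p̂_i = (1/2)·L_i/(Σ_{j=1}^n L_j) + 1/(2n), which satisfy 0 < p̂_i ≤ 1 and Σ_i p̂_i = 1. Then (1/n) max_{i∈[n]} L_i/p̂_i ≤ 2 L̄ where L̄ = (1/n) Σ_{j=1}^n L_j, and (1/n²) Σ_{i=1}^n ‖h_i‖²/p̂_i ≤ (2/n) Σ_{i=1}^n ‖h_i‖². Consequently, for the single element sampling with probabilities p̂_i, the expected smoothness constant 𝓛_max = (1/n) max_i L_i/p̂_i (with L_i = λmax(M_i)) satisfies 𝓛_max ≤ 2L̄ and the gradient noise σ² = (1/n²) Σ_i ‖h_i‖²/p̂_i satisfies σ² ≤ 2 h̄, where h̄ = (1/n) Σ_i ‖h_i‖². -/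
/-! Each `p̂ i` dominates both halves of its mixture: `p̂ i ≥ L i / (2 Σ L)` gives
`L i / p̂ i ≤ 2 Σ L`, and `p̂ i ≥ 1 / (2n)` gives `‖h i‖² / p̂ i ≤ 2n ‖h i‖²`. -/

open Finset

noncomputable section

namespace PartiallyBiased

variable {ι : Type*} [Fintype ι] (L : ι → ℝ)

def prob (i : ι) : ℝ :=
  (1 / 2) * (L i / ∑ j, L j) + 1 / (2 * (Fintype.card ι : ℝ))

variable {L}

lemma half_div_sum_le_prob (i : ι) : (1 / 2) * (L i / ∑ j, L j) ≤ prob L i := by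
  unfold prob
  have : 0 ≤ 1 / (2 * (Fintype.card ι : ℝ)) := by positivity
  linarith

lemma one_div_two_card_le_prob (hL : ∀ i, 0 ≤ L i) (i : ι) :
    1 / (2 * (Fintype.card ι : ℝ)) ≤ prob L i := by
  unfold prob
  have : 0 ≤ (1 / 2) * (L i / ∑ j, L j) :=
    mul_nonneg (by norm_num) (div_nonneg (hL i) (sum_nonneg fun j _ => hL j))
  linarith

lemma prob_pos [Nonempty ι] (hL : ∀ i, 0 ≤ L i) (i : ι) : 0 < prob L i :=
  lt_of_lt_of_le (by positivity) (one_div_two_card_le_prob hL i)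

lemma prob_le_one [Nonempty ι] (hL : ∀ i, 0 ≤ L i) (i : ι) : prob L i ≤ 1 := by
  have hLi : L i / ∑ j, L j ≤ 1 :=
    div_le_one_of_le₀ (single_le_sum (fun j _ => hL j) (mem_univ i))
      (sum_nonneg fun j _ => hL j)
  have hcard : (1 : ℝ) ≤ Fintype.card ι := by exact_mod_cast Fintype.card_pos
  have : 1 / (2 * (Fintype.card ι : ℝ)) ≤ 1 / 2 :=
    one_div_le_one_div_of_le (by norm_num) (by linarith)
  unfold prob
  linarith

lemma sum_prob [Nonempty ι] (hS : ∑ j, L j ≠ 0) : ∑ i, prob L i = 1 := by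
  have hcard : (Fintype.card ι : ℝ) ≠ 0 := by exact_mod_cast Fintype.card_ne_zero
  simp only [prob, sum_add_distrib, ← mul_sum, ← sum_div, sum_const, card_univ, nsmul_eq_mul]
  field_simp
  ring

lemma div_prob_le (hL : ∀ i, 0 ≤ L i) (hS : 0 < ∑ j, L j) (i : ι) :
    L i / prob L i ≤ 2 * ∑ j, L j := by
  have hp : 0 < prob L i :=
    have : Nonempty ι := ⟨i⟩
    prob_pos hL i
  rw [div_le_iff₀ hp]
  have := half_div_sum_le_prob (L := L) i
  rw [mul_div_assoc', div_le_iff₀ hS] at this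
  linarith

lemma iSup_div_prob_le [Nonempty ι] (hL : ∀ i, 0 ≤ L i) (hS : 0 < ∑ j, L j) :
    ⨆ i, L i / prob L i ≤ 2 * ∑ j, L j :=
  ciSup_le (div_prob_le hL hS)

lemma sum_div_prob_le [Nonempty ι] (hL : ∀ i, 0 ≤ L i) (a : ι → ℝ) (ha : ∀ i, 0 ≤ a i) :
    ∑ i, a i / prob L i ≤ 2 * Fintype.card ι * ∑ i, a i := by
  rw [mul_sum]
  refine sum_le_sum fun i _ => ?_
  rw [div_le_iff₀ (prob_pos hL i)]
  calc a i = 2 * Fintype.card ι * a i * (1 / (2 * (Fintype.card ι : ℝ))) := by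
          have : (Fintype.card ι : ℝ) ≠ 0 := by exact_mod_cast Fintype.card_ne_zero
          field_simp
    _ ≤ 2 * Fintype.card ι * a i * prob L i :=
          mul_le_mul_of_nonneg_left (one_div_two_card_le_prob hL i)
            (mul_nonneg (by positivity) (ha i))

end PartiallyBiased

end

open PartiallyBiased in
/-- **Partially biased sampling bounds.** Let `L_1, …, L_n > 0` and `h_1, …, h_n ∈ ℝ^d`, and
define the partially biased probabilities `p̂_i = (1/2) L_i/(Σ_j L_j) + 1/(2n)`. Then
`0 < p̂_i ≤ 1` and `Σ_i p̂_i = 1`; moreover the expected smoothness constant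
`𝓛_max = (1/n) max_i L_i/p̂_i` of the corresponding single element sampling satisfies
`𝓛_max ≤ 2 L̄` with `L̄ = (1/n) Σ_j L_j`, and the gradient noise
`σ² = (1/n²) Σ_i ‖h_i‖²/p̂_i` satisfies `σ² ≤ 2 h̄` with `h̄ = (1/n) Σ_i ‖h_i‖²`. -/
theorem partially_biased_sampling_bounds
    {d n : ℕ} (hn : 0 < n)
    (L : Fin n → ℝ) (hL : ∀ i, 0 < L i)
    (h : Fin n → EuclideanSpace ℝ (Fin d))
    (phat : Fin n → ℝ)
    (hphat : ∀ i, phat i = (1 / 2) * (L i / ∑ j, L j) + 1 / (2 * (n : ℝ))) :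
    (∀ i, 0 < phat i ∧ phat i ≤ 1)
      ∧ (∑ i, phat i = 1)
      ∧ (1 / (n : ℝ)) * (⨆ i : Fin n, L i / phat i) ≤ 2 * ((1 / (n : ℝ)) * ∑ j, L j)
      ∧ (1 / (n : ℝ) ^ 2) * ∑ i, ‖h i‖ ^ 2 / phat i
          ≤ 2 * ((1 / (n : ℝ)) * ∑ i, ‖h i‖ ^ 2) := by
  have : Nonempty (Fin n) := ⟨⟨0, hn⟩⟩
  have hphat : phat = prob L := funext fun i => by simp [hphat, prob]
  subst hphat
  have hL' : ∀ i, 0 ≤ L i := fun i => (hL i).le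
  have hS : 0 < ∑ j, L j := sum_pos (fun i _ => hL i) univ_nonempty
  refine ⟨fun i => ⟨prob_pos hL' i, prob_le_one hL' i⟩, sum_prob hS.ne', ?_, ?_⟩
  · calc (1 / (n : ℝ)) * ⨆ i, L i / prob L i ≤ (1 / (n : ℝ)) * (2 * ∑ j, L j) :=
          mul_le_mul_of_nonneg_left (iSup_div_prob_le hL' hS) (by positivity)
      _ = 2 * ((1 / (n : ℝ)) * ∑ j, L j) := by ring
  · have := sum_div_prob_le hL' (fun i => ‖h i‖ ^ 2) (fun i => by positivity)
    rw [Fintype.card_fin] at this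
    calc (1 / (n : ℝ) ^ 2) * ∑ i, ‖h i‖ ^ 2 / prob L i
        ≤ (1 / (n : ℝ) ^ 2) * (2 * n * ∑ i, ‖h i‖ ^ 2) :=
          mul_le_mul_of_nonneg_left this (by positivity)
      _ = 2 * ((1 / (n : ℝ)) * ∑ i, ‖h i‖ ^ 2) := by field_simp
end
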